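/- Let E(t) = sin t + i·ξ(t) with ξ'(t) = sin²t/√(1+sin²t), ξ(0)=0, with signed curvature κ(t) = 2 sin t. Then the turning angle of E on [0,b] satisfies ∫₀^b κ(t)|E'(t)| dt = 2·arccos(cos b/√2) − π/2 for b ∈ [0,π]. -/

import Mathlib

/-! The integrand is the derivative of `2 * arccos (cos t / √2)`, because
`1 - cos² t / 2 = (1 + sin² t) / 2`; the fundamental theorem of calculus and
`arccos (1 / √2) = π / 4` then give the value. -/

open Real

lemma abs_cos_div_sqrt_two_lt_one (t : ℝ) : |cos t / √2| < 1 := by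
  have hpos : (0 : ℝ) < √2 := by positivity
  rw [abs_div, abs_of_pos hpos, div_lt_one hpos]
  exact (abs_cos_le_one t).trans_lt one_lt_sqrt_two

lemma one_sub_sq_cos_div_sqrt_two (t : ℝ) :
    1 - (cos t / √2) ^ 2 = (1 + sin t ^ 2) / 2 := by
  rw [div_pow, sq_sqrt zero_le_two]
  linarith [sin_sq_add_cos_sq t]

lemma hasDerivAt_two_mul_arccos_cos_div_sqrt_two (t : ℝ) :
    HasDerivAt (fun t => 2 * arccos (cos t / √2))
      (2 * sin t * (1 / √(1 + sin t ^ 2))) t := by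
  have hlt := abs_lt.mp (abs_cos_div_sqrt_two_lt_one t)
  refine (((hasDerivAt_arccos hlt.1.ne' hlt.2.ne).comp t
    ((hasDerivAt_cos t).div_const √2)).const_mul 2).congr_deriv ?_
  rw [one_sub_sq_cos_div_sqrt_two, sqrt_div' _ zero_le_two]
  field_simp

lemma arccos_one_div_sqrt_two : arccos (1 / √2) = π / 4 := by
  rw [← arccos_cos (x := π / 4) (by positivity) (by linarith [pi_pos]),
    cos_pi_div_four]
  congr 1
  field_simp
  rw [sq_sqrt zero_le_two]

theorem stmt_3_general (b : ℝ) :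
    ∫ t in (0:ℝ)..b, (2 * Real.sin t) * (1 / Real.sqrt (1 + Real.sin t ^ 2)) =
      2 * arccos (Real.cos b / Real.sqrt 2) - π / 2 := by
  have hcont : Continuous fun t => 2 * sin t * (1 / √(1 + sin t ^ 2)) :=
    (continuous_const.mul continuous_sin).mul <| continuous_const.div (by fun_prop)
      fun t => (sqrt_pos.2 (by positivity)).ne'
  rw [intervalIntegral.integral_eq_sub_of_hasDerivAt
    (fun t _ => hasDerivAt_two_mul_arccos_cos_div_sqrt_two t) (hcont.intervalIntegrable 0 b),
    cos_zero, arccos_one_div_sqrt_two]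
  ring

theorem stmt_3 (b : ℝ) (hb : b ∈ Set.Icc 0 π) :
    ∫ t in (0:ℝ)..b, (2 * Real.sin t) * (1 / Real.sqrt (1 + Real.sin t ^ 2)) =
      2 * arccos (Real.cos b / Real.sqrt 2) - π / 2 :=
  stmt_3_general b
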